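/- arXiv:2511.17050 — 2 statements merged into one kernel-verified Lean document; each statement's English description precedes it below -/
import Mathlib

section
/- Let μ > 0 and let i, j be real numbers with 0 ≤ i < j ≤ μ. Then G_μ((i+j)/2) < ((1−Θ)/(2−Θ))·G_μ(i) + (1/(2−Θ))·G_μ(j), where Θ = Θ(i, j, μ). -/
/-- The function `g(x) = (1/π)(√(1−x²) − x·arccos x)`. -/
noncomputable def g (x : ℝ) : ℝ := (1 / Real.pi) * (Real.sqrt (1 - x ^ 2) - x * Real.arccos x)

/-- For `μ > 0`, `G_μ(x) = μ·g(x/μ)`. -/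
noncomputable def G (μ x : ℝ) : ℝ := μ * g (x / μ)

/-- `Θ(i,j,μ) = ((j−i)/(2μ))·g''(i/μ)/|g'(i/μ)| = (j−i)/(2μ·arccos(i/μ)·√(1−(i/μ)²))`. -/
noncomputable def Θ (i j μ : ℝ) : ℝ :=
  (j - i) / (2 * μ * Real.arccos (i / μ) * Real.sqrt (1 - (i / μ) ^ 2))

/-! With `x = i/μ`, `y = j/μ`, `h = (y - x)/2`, `A = arccos x` and `S = √(1 - x²)`, one has
`Θ = h / (A S)`, and the claim is `Θ (g x - g m) < g x + g y - 2 g m` at the midpoint `m`.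
Since `|g'| = arccos/π` decreases, the mean value theorem gives `g x - g m < h A / π`.
Since `g'' = 1/(π√(1 - t²)) ≥ 1/(π S)` on `[x, 1]`, `g` is `1/(π S)`-strongly convex there,
so `g x + g y - 2 g m ≥ h² / (π S) = Θ · h A / π`. -/

open Real Set

lemma StrongConvexOn.two_mul_apply_midpoint_add_le {s : Set ℝ} {m : ℝ} {f : ℝ → ℝ}
    (hf : StrongConvexOn s m f) {x y : ℝ} (hx : x ∈ s) (hy : y ∈ s) :
    2 * f ((x + y) / 2) + m / 4 * (x - y) ^ 2 ≤ f x + f y := by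
  have key := hf.2 hx hy (by norm_num : (0 : ℝ) ≤ 1 / 2) (by norm_num : (0 : ℝ) ≤ 1 / 2)
    (by norm_num)
  simp only [smul_eq_mul, Real.norm_eq_abs, sq_abs] at key
  have hmid : 1 / 2 * x + 1 / 2 * y = (x + y) / 2 := by ring
  rw [hmid] at key
  linarith

lemma hasDerivAt_g {x : ℝ} (h₁ : -1 < x) (h₂ : x < 1) :
    HasDerivAt g (-arccos x / π) x := by
  have hs : 0 < 1 - x ^ 2 := by nlinarith
  have hsqrt : HasDerivAt (fun t => √(1 - t ^ 2)) (1 / (2 * √(1 - x ^ 2)) * -(2 * x)) x :=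
    (hasDerivAt_sqrt hs.ne').comp x (by simpa using (hasDerivAt_pow 2 x).const_sub 1)
  have harccos := (hasDerivAt_id' x).mul (hasDerivAt_arccos h₁.ne' h₂.ne)
  refine (((hsqrt.sub harccos).const_mul (1 / π) : _) : HasDerivAt g _ x).congr_deriv ?_
  have := sqrt_pos.2 hs
  field_simp
  ring

lemma continuous_g : Continuous g := by
  unfold g
  fun_prop

lemma g_sub_lt_mul_arccos {x m : ℝ} (hx : -1 ≤ x) (hxm : x < m) (hm : m ≤ 1) :
    g x - g m < (m - x) * arccos x / π := by
  obtain ⟨c, hc, hslope⟩ := exists_hasDerivAt_eq_slope g (fun t => -arccos t / π) hxm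
    continuous_g.continuousOn
    fun t ht => hasDerivAt_g (by linarith [ht.1]) (by linarith [ht.2])
  have harccos : arccos c < arccos x :=
    strictAntiOn_arccos ⟨hx, by linarith⟩ ⟨by linarith [hc.1], by linarith [hc.2]⟩ hc.1
  have hsub : g x - g m = (m - x) * arccos c / π := by
    field_simp [(sub_pos.2 hxm).ne'] at hslope
    field_simp
    linarith
  rw [hsub]
  gcongr

lemma strongConvexOn_g {x : ℝ} (hx : 0 ≤ x) :
    StrongConvexOn (Icc x 1) (1 / (π * √(1 - x ^ 2))) g := by
  set c := 1 / (π * √(1 - x ^ 2))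
  rw [strongConvexOn_iff_convex]
  simp only [Real.norm_eq_abs, sq_abs]
  refine convexOn_of_hasDerivWithinAt2_nonneg (convex_Icc x 1)
    (f' := fun t => -arccos t / π - c * t) (f'' := fun t => 1 / (π * √(1 - t ^ 2)) - c)
    (continuous_g.sub (by fun_prop)).continuousOn (fun t ht => ?_) (fun t ht => ?_)
    (fun t ht => ?_) <;> rw [interior_Icc] at ht <;> obtain ⟨hxt, ht1⟩ := ht
  · exact (((hasDerivAt_g (by linarith) ht1).sub ((hasDerivAt_pow 2 t).const_mul (c / 2))
      ).congr_deriv (by ring)).hasDerivWithinAt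
  · exact ((((hasDerivAt_arccos (by linarith) ht1.ne).neg.div_const π).sub
      ((hasDerivAt_id' t).const_mul c)).congr_deriv (by ring)).hasDerivWithinAt
  · have hs : 0 < √(1 - t ^ 2) := sqrt_pos.2 (by nlinarith)
    have : √(1 - t ^ 2) ≤ √(1 - x ^ 2) := sqrt_le_sqrt (by nlinarith)
    simp only [sub_nonneg, c]
    gcongr

lemma Θ_div_div (i j μ : ℝ) : Θ i j μ = Θ (i / μ) (j / μ) 1 := by
  simp only [Θ, div_one, ← sub_div, div_div]
  ring

lemma one_sub_le_arccos_mul_sqrt {x : ℝ} (hx : 0 ≤ x) (hx1 : x ≤ 1) :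
    1 - x ≤ arccos x * √(1 - x ^ 2) := by
  have hsin : √(1 - x ^ 2) ≤ arccos x := sin_arccos x ▸ sin_le (arccos_nonneg x)
  have hsq : √(1 - x ^ 2) ^ 2 = 1 - x ^ 2 := sq_sqrt (by nlinarith)
  nlinarith [sqrt_nonneg (1 - x ^ 2)]

lemma Θ_one_le_half {x y : ℝ} (hx : 0 ≤ x) (hxy : x < y) (hy : y ≤ 1) :
    Θ x y 1 ≤ 1 / 2 := by
  have hAS : 0 < arccos x * √(1 - x ^ 2) :=
    mul_pos (arccos_pos.2 (by linarith)) (sqrt_pos.2 (by nlinarith))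
  have := one_sub_le_arccos_mul_sqrt hx (by linarith)
  simp only [Θ, div_one, mul_one, mul_assoc]
  rw [div_le_iff₀ (by positivity)]
  linarith

lemma g_midpoint_lt {x y : ℝ} (hx : 0 ≤ x) (hxy : x < y) (hy : y ≤ 1) :
    g ((x + y) / 2) <
      (1 - Θ x y 1) / (2 - Θ x y 1) * g x + 1 / (2 - Θ x y 1) * g y := by
  set θ := Θ x y 1 with hθ
  have hA : 0 < arccos x := arccos_pos.2 (by linarith)
  have hS : 0 < √(1 - x ^ 2) := sqrt_pos.2 (by nlinarith)
  have hθ_pos : 0 < θ := by simp only [hθ, Θ]; field_simp; linarith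
  have hθ_lt : θ < 2 := by linarith [Θ_one_le_half hx hxy hy]
  have hslope := g_sub_lt_mul_arccos (x := x) (m := (x + y) / 2)
    (by linarith) (by linarith) (by linarith)
  have hconvex := (strongConvexOn_g hx).two_mul_apply_midpoint_add_le
    (left_mem_Icc.2 (by linarith)) ⟨hxy.le, hy⟩
  have hgap : θ * (g x - g ((x + y) / 2)) < g x + g y - 2 * g ((x + y) / 2) :=
    calc θ * (g x - g ((x + y) / 2)) < θ * (((x + y) / 2 - x) * arccos x / π) :=
          mul_lt_mul_of_pos_left hslope hθ_pos
      _ = 1 / (π * √(1 - x ^ 2)) / 4 * (x - y) ^ 2 := by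
          simp only [hθ, Θ]
          field_simp
          ring
      _ ≤ g x + g y - 2 * g ((x + y) / 2) := by linarith
  rw [div_mul_eq_mul_div, div_mul_eq_mul_div, ← add_div, lt_div_iff₀ (by linarith)]
  linarith

/-- Lemma 2.2: for `0 ≤ i < j ≤ μ`,
`G_μ((i+j)/2) < ((1−Θ)/(2−Θ))·G_μ(i) + (1/(2−Θ))·G_μ(j)` with `Θ = Θ(i,j,μ)`. -/
theorem stmt1 (μ i j : ℝ) (hμ : 0 < μ) (hi : 0 ≤ i) (hij : i < j) (hj : j ≤ μ) :
    G μ ((i + j) / 2) <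
      (1 - Θ i j μ) / (2 - Θ i j μ) * G μ i + 1 / (2 - Θ i j μ) * G μ j := by
  have hmid : (i + j) / 2 / μ = (i / μ + j / μ) / 2 := by ring
  have key := g_midpoint_lt (div_nonneg hi hμ.le) (div_lt_div_of_pos_right hij hμ)
    ((div_le_one hμ).2 hj)
  rw [Θ_div_div, G, G, G, hmid]
  linarith [mul_lt_mul_of_pos_left key hμ]
end

section
/- Let d ≥ 11 be an integer and let L, μ > 0. Set σ = Lμ/π and σ' = Lμ/(π√(d−2)), and suppose σ' ≥ 1 (so that σ − σ' ≥ 2 and ⌊σ'⌋ + 2 ≤ ⌊σ⌋). Then Σ_{l=1}^{⌊σ⌋} (1 − (l/σ)²)^{(d−1)/2} ≤ ∫_0^σ (1 − (x/σ)²)^{(d−1)/2} dx − ((d−1)/4)·(⌊σ'⌋/σ)²·(1 − ((d−3)/4)·(⌊σ'⌋/σ)²) − (1/2)·(1 − ((⌊σ'⌋+2)/σ)²)^{(d−1)/2}. -/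
/-!
Write `f x = (1 - (x / σ) ^ 2) ^ p` with `p = (d - 1) / 2`. Its second derivative is
`2p/σ² · (1 - (x/σ)²)^(p-2) · ((2p - 1)(x/σ)² - 1)`, so `f` is concave on `[0, σ']` and convex on
`[σ', σ]`, where `σ' = σ / √(2p - 1)` is exactly the `σ'` of the statement. Compare each `f l` with
the integral of `f` over the unit interval to its left, writing `m = ⌊σ'⌋` and `n = ⌊σ⌋`:

* for `l ≤ m` the chord lies below the concave `f`, so `f l ≤ ∫_{l-1}^l f - (f (l-1) - f l) / 2`,
  which telescopes to a saving of `(f 0 - f m) / 2`;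
* for `l = m + 1` monotonicity gives `f l ≤ ∫_{l-1}^l f`;
* for `m + 2 ≤ l < n` the secant through `l` and `l + 1` lies below the convex `f` on `[l - 1, l]`,
  so `f l ≤ ∫_{l-1}^l f - (f l - f (l+1)) / 2`, a saving of `(f (m+2) - f n) / 2`;
* for `l = n` the secant through `n` and `σ` (where `f σ = 0` and `σ - n < 1`) gives a saving of
  `f n / 2`.

Finally the Taylor bound `(1 - t) ^ p ≤ 1 - p t + p (p - 1) t² / 2` makes `(f 0 - f m) / 2`
explicit.
-/

open Set MeasureTheory intervalIntegral

theorem add_half_le_integral_of_affine_le {f : ℝ → ℝ} {a c : ℝ}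
    (hf : IntervalIntegrable f volume a (a + 1))
    (h : ∀ x ∈ Icc a (a + 1), f (a + 1) + c * (a + 1 - x) ≤ f x) :
    f (a + 1) + c / 2 ≤ ∫ x in a..a + 1, f x := by
  have haffine : ∫ x in a..a + 1, (f (a + 1) + c * (a + 1 - x)) = f (a + 1) + c / 2 := by
    rw [integral_add intervalIntegrable_const (Continuous.intervalIntegrable (by fun_prop) _ _),
      intervalIntegral.integral_const_mul, integral_comp_sub_left (fun x => x)]
    simp
    ring
  rw [← haffine]
  exact integral_mono_on (by linarith) (Continuous.intervalIntegrable (by fun_prop) _ _) hf h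

theorem ConcaveOn.add_mul_sub_le {D : Set ℝ} {f : ℝ → ℝ} (hf : ConcaveOn ℝ D f) {a x : ℝ}
    (ha : a ∈ D) (ha' : a + 1 ∈ D) (hx : x ∈ Icc a (a + 1)) :
    f (a + 1) + (f a - f (a + 1)) * (a + 1 - x) ≤ f x := by
  have key := hf.2 ha ha' (by linarith [hx.2] : 0 ≤ a + 1 - x) (by linarith [hx.1] : 0 ≤ x - a)
    (by ring)
  simp only [smul_eq_mul] at key
  rw [show (a + 1 - x) * a + (x - a) * (a + 1) = x by ring] at key
  linarith

theorem ConvexOn.add_slope_mul_sub_le {D : Set ℝ} {f : ℝ → ℝ} (hf : ConvexOn ℝ D f) {x y z : ℝ}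
    (hx : x ∈ D) (hz : z ∈ D) (hxy : x ≤ y) (hyz : y < z) :
    f y + (f y - f z) / (z - y) * (y - x) ≤ f x := by
  rcases hxy.eq_or_lt with rfl | hxy
  · simp
  have key := hf.slope_mono_adjacent hx hz hxy hyz
  rw [div_le_iff₀ (sub_pos.2 hxy)] at key
  have : (f y - f z) / (z - y) * (y - x) = -((f z - f y) / (z - y) * (y - x)) := by ring
  linarith

theorem ConvexOn.three_halves_le_integral {f : ℝ → ℝ} {a b : ℝ} (hf : ConvexOn ℝ (Icc a b) f)
    (hab : a + 1 ≤ b) (hba : b ≤ a + 2) (hfb : f b = 0) (hf0 : ∀ x ∈ Icc a b, 0 ≤ f x)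
    (hint : IntervalIntegrable f volume a (a + 1)) :
    f (a + 1) + f (a + 1) / 2 ≤ ∫ x in a..a + 1, f x := by
  refine add_half_le_integral_of_affine_le hint fun x hx => ?_
  have hx' : x ∈ Icc a b := ⟨hx.1, hx.2.trans hab⟩
  rcases hab.eq_or_lt with hb | hb
  · rw [hb, hfb]
    simpa using hf0 x hx'
  have key := hf.add_slope_mul_sub_le hx' ⟨by linarith, le_rfl⟩ hx.2 hb
  have hslope : f (a + 1) ≤ (f (a + 1) - f b) / (b - (a + 1)) := by
    rw [hfb, sub_zero]
    exact le_div_self (hf0 _ ⟨by linarith, hab⟩) (by linarith) (by linarith)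
  nlinarith [hx.2]

theorem Nat.cast_le_and_cast_add_one_le_of_mem_Ico {a b i : ℕ} (hi : i ∈ Finset.Ico a b) :
    (a : ℝ) ≤ i ∧ (i : ℝ) + 1 ≤ b := by
  obtain ⟨hai, hib⟩ := Finset.mem_Ico.1 hi
  exact ⟨by exact_mod_cast hai, by exact_mod_cast hib⟩

theorem IntervalIntegrable.of_mem_Ico {f : ℝ → ℝ} {a b i : ℕ}
    (hf : IntervalIntegrable f volume a b) (hi : i ∈ Finset.Ico a b) :
    IntervalIntegrable f volume i (i + 1) := by
  obtain ⟨hai, hib⟩ := Nat.cast_le_and_cast_add_one_le_of_mem_Ico hi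
  exact hf.mono_set (uIcc_subset_uIcc (mem_uIcc_of_le hai (by linarith))
    (mem_uIcc_of_le (by linarith) hib))

theorem sum_Ico_le_integral_sub_half {f : ℝ → ℝ} {g : ℕ → ℝ} {a b : ℕ} (hab : a ≤ b)
    (hf : IntervalIntegrable f volume a b)
    (h : ∀ i ∈ Finset.Ico a b, f (i + 1) + (g i - g (i + 1)) / 2 ≤ ∫ x in (i : ℝ)..i + 1, f x) :
    ∑ i ∈ Finset.Ico a b, f (i + 1) ≤ (∫ x in (a : ℝ)..b, f x) - (g a - g b) / 2 := by
  calc ∑ i ∈ Finset.Ico a b, f (i + 1)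
      ≤ ∑ i ∈ Finset.Ico a b, ((∫ x in (i : ℝ)..i + 1, f x) + (g (i + 1) - g i) / 2) :=
        Finset.sum_le_sum fun i hi => by linarith [h i hi]
    _ = (∫ x in (a : ℝ)..b, f x) - (g a - g b) / 2 := by
        rw [Finset.sum_add_distrib, ← Finset.sum_div, Finset.sum_Ico_sub g hab,
          ← sum_integral_adjacent_intervals_Ico (a := Nat.cast) hab
            fun k hk => by exact_mod_cast hf.of_mem_Ico (Finset.mem_Ico.2 hk)]
        push_cast
        ring

theorem sum_Ico_le_integral_of_concaveOn {f : ℝ → ℝ} {a b : ℕ} (hab : a ≤ b)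
    (hf : ConcaveOn ℝ (Icc (a : ℝ) b) f) (hint : IntervalIntegrable f volume a b) :
    ∑ i ∈ Finset.Ico a b, f (i + 1) ≤ (∫ x in (a : ℝ)..b, f x) - (f a - f b) / 2 := by
  refine sum_Ico_le_integral_sub_half (g := fun i => f i) hab hint fun i hi => ?_
  obtain ⟨hai, hib⟩ := Nat.cast_le_and_cast_add_one_le_of_mem_Ico hi
  push_cast
  exact add_half_le_integral_of_affine_le (hint.of_mem_Ico hi) fun x hx =>
    hf.add_mul_sub_le ⟨hai, by linarith⟩ ⟨by linarith, hib⟩ hx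

theorem sum_Ico_le_integral_of_convexOn {f : ℝ → ℝ} {a b : ℕ} (hab : a ≤ b)
    (hf : ConvexOn ℝ (Icc (a : ℝ) (b + 1)) f) (hint : IntervalIntegrable f volume a b) :
    ∑ i ∈ Finset.Ico a b, f (i + 1) ≤ (∫ x in (a : ℝ)..b, f x) - (f (a + 1) - f (b + 1)) / 2 := by
  simpa using sum_Ico_le_integral_sub_half (g := fun i => f (i + 1)) hab hint fun i hi => by
    obtain ⟨hai, hib⟩ := Nat.cast_le_and_cast_add_one_le_of_mem_Ico hi
    refine add_half_le_integral_of_affine_le (hint.of_mem_Ico hi) fun x hx => ?_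
    have key := hf.add_slope_mul_sub_le (z := i + 1 + 1) ⟨by linarith [hx.1], by linarith [hx.2]⟩
      ⟨by linarith, by linarith⟩ hx.2 (by linarith)
    push_cast
    simpa using key

theorem sum_Icc_one_eq_of_lt (f : ℝ → ℝ) {m k : ℕ} (hmk : m < k) :
    ∑ l ∈ Finset.Icc 1 (k + 1), f l = ∑ i ∈ Finset.Ico 0 m, f (i + 1) + f (m + 1)
      + ∑ i ∈ Finset.Ico (m + 1) k, f (i + 1) + f (k + 1) := by
  have h : ∑ l ∈ Finset.Icc 1 (k + 1), f l = ∑ i ∈ Finset.Ico 0 (k + 1), f (i + 1) := by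
    rw [← Finset.Ico_add_one_right_eq_Icc, Finset.sum_Ico_eq_sum_range, ← Finset.range_eq_Ico]
    simp [add_comm]
  rw [h, Finset.sum_Ico_succ_top k.zero_le, ← Finset.sum_Ico_consecutive _ m.zero_le hmk.le,
    Finset.sum_eq_sum_Ico_succ_bot hmk]
  ring

theorem sum_Icc_le_integral_of_concaveOn_of_convexOn {f : ℝ → ℝ} {σ : ℝ} {m n : ℕ}
    (hmn : m + 2 ≤ n) (hnσ : (n : ℝ) ≤ σ) (hσn : σ < n + 1)
    (hanti : AntitoneOn f (Icc 0 σ)) (hfσ : f σ = 0)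
    (hconc : ConcaveOn ℝ (Icc (0 : ℝ) m) f) (hconv : ConvexOn ℝ (Icc ((m : ℝ) + 1) σ) f) :
    ∑ l ∈ Finset.Icc 1 n, f l ≤ (∫ x in (0 : ℝ)..σ, f x) - (f 0 - f m) / 2 - f (m + 2) / 2 := by
  obtain ⟨k, rfl⟩ : ∃ k, n = k + 1 := ⟨n - 1, by omega⟩
  push_cast at hnσ hσn
  have hmk : (m : ℝ) + 1 ≤ k := by exact_mod_cast (by omega : m + 1 ≤ k)
  have hint : ∀ a b, 0 ≤ a → a ≤ b → b ≤ σ → IntervalIntegrable f volume a b :=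
    fun a b ha hab hb =>
      (hanti.mono (uIcc_subset_Icc ⟨ha, hab.trans hb⟩ ⟨ha.trans hab, hb⟩)).intervalIntegrable
  have hf0 : ∀ x ∈ Icc 0 σ, 0 ≤ f x := fun x hx => hfσ ▸ hanti hx ⟨hx.1.trans hx.2, le_rfl⟩ hx.2
  have concave_part := sum_Ico_le_integral_of_concaveOn m.zero_le (by simpa using hconc)
    (by simpa using hint 0 m le_rfl (by positivity) (by linarith))
  rw [Nat.cast_zero] at concave_part
  have middle_term : f (m + 1) ≤ ∫ x in (m : ℝ)..m + 1, f x := by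
    simpa using add_half_le_integral_of_affine_le (a := m) (c := 0)
      (hint _ _ (by positivity) (by linarith) (by linarith)) fun x hx => by
        simpa using hanti ⟨(by positivity : (0 : ℝ) ≤ m).trans hx.1, by linarith [hx.2]⟩
          ⟨by positivity, by linarith⟩ hx.2
  have convex_part := sum_Ico_le_integral_of_convexOn (a := m + 1) (b := k) (by omega)
    (hconv.subset (by push_cast; exact Icc_subset_Icc le_rfl (by linarith)) (convex_Icc _ _))
    (by push_cast; exact hint _ _ (by positivity) hmk (by linarith))
  rw [Nat.cast_add_one, add_assoc, one_add_one_eq_two] at convex_part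
  have last_term :=
    (hconv.subset (Icc_subset_Icc hmk le_rfl) (convex_Icc _ _)).three_halves_le_integral hnσ (by linarith) hfσ (fun x hx => hf0 x ⟨by linarith [hx.1], hx.2⟩)
    (hint _ _ (by positivity) (by linarith) hnσ)
  have tail_nonneg : 0 ≤ ∫ x in (k : ℝ) + 1..σ, f x :=
    integral_nonneg hnσ fun x hx => hf0 x ⟨by linarith [hx.1], hx.2⟩
  have hsplit : ∫ x in (0 : ℝ)..σ, f x = (∫ x in (0 : ℝ)..m, f x) + (∫ x in (m : ℝ)..m + 1, f x)
      + (∫ x in (m : ℝ) + 1..k, f x) + (∫ x in (k : ℝ)..k + 1, f x)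
      + ∫ x in (k : ℝ) + 1..σ, f x := by
    rw [integral_add_adjacent_intervals, integral_add_adjacent_intervals,
      integral_add_adjacent_intervals, integral_add_adjacent_intervals]
    all_goals exact hint _ _ (by positivity) (by linarith) (by linarith)
  rw [sum_Icc_one_eq_of_lt f (m := m) (by omega), hsplit]
  linarith

theorem one_sub_rpow_le_quadratic {p t : ℝ} (hp : 2 ≤ p) (ht0 : 0 ≤ t) (ht1 : t ≤ 1) :
    (1 - t) ^ p ≤ 1 - p * t + p * (p - 1) / 2 * t ^ 2 := by
  have hderiv : ∀ s ∈ uIcc 0 t,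
      HasDerivAt (fun s : ℝ => (1 - s) ^ p) (-(p * (1 - s) ^ (p - 1))) s := fun s _ =>
    ((Real.hasDerivAt_rpow_const (x := 1 - s) (Or.inr (by linarith : 1 ≤ p))).comp s
      ((hasDerivAt_id s).const_sub 1)).congr_deriv (by simp)
  have hcont : Continuous fun s : ℝ => -(p * (1 - s) ^ (p - 1)) :=
    ((Real.continuous_rpow_const (by linarith)).comp (by fun_prop)).const_smul p |>.neg
  have ftc := integral_eq_sub_of_hasDerivAt hderiv (hcont.intervalIntegrable 0 t)
  have bernoulli : ∀ s ∈ Icc 0 t, -(p * (1 - s) ^ (p - 1)) ≤ -p + p * (p - 1) * s := by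
    intro s hs
    have := one_add_mul_self_le_rpow_one_add (by linarith [hs.2] : -1 ≤ -s)
      (by linarith : 1 ≤ p - 1)
    rw [← sub_eq_add_neg] at this
    nlinarith
  have hmono := integral_mono_on (μ := volume) ht0 (hcont.intervalIntegrable 0 t)
    (Continuous.intervalIntegrable (by fun_prop) 0 t) bernoulli
  rw [ftc, integral_add intervalIntegrable_const (Continuous.intervalIntegrable (by fun_prop) _ _),
    intervalIntegral.integral_const_mul, integral_id] at hmono
  simp at hmono
  nlinarith

section Profile

variable {σ p : ℝ}

theorem continuous_one_sub_div_sq_rpow (σ : ℝ) (hp : 0 ≤ p) :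
    Continuous fun x : ℝ => (1 - (x / σ) ^ 2) ^ p :=
  (Real.continuous_rpow_const hp).comp (by fun_prop)

theorem antitoneOn_one_sub_div_sq_rpow (hσ : 0 < σ) (hp : 0 ≤ p) :
    AntitoneOn (fun x => (1 - (x / σ) ^ 2) ^ p) (Icc 0 σ) := by
  intro x hx y hy hxy
  have h0 : 0 ≤ x / σ := div_nonneg hx.1 hσ.le
  have h1 : x / σ ≤ y / σ := div_le_div_of_nonneg_right hxy hσ.le
  have h2 : y / σ ≤ 1 := (div_le_one hσ).2 hy.2
  exact Real.rpow_le_rpow (by nlinarith) (by nlinarith) hp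

theorem hasDerivAt_one_sub_div_sq_rpow {x : ℝ} (hx : 0 < 1 - (x / σ) ^ 2) :
    HasDerivAt (fun x => (1 - (x / σ) ^ 2) ^ p)
      (-(2 * p / σ ^ 2) * x * (1 - (x / σ) ^ 2) ^ (p - 1)) x := by
  have hu := (((hasDerivAt_id x).div_const σ).pow 2).const_sub 1
  refine ((Real.hasDerivAt_rpow_const (p := p) (Or.inl hx.ne')).comp x hu).congr_deriv ?_
  simp only [id]
  ring

theorem hasDerivAt_deriv_one_sub_div_sq_rpow {x : ℝ} (hx : 0 < 1 - (x / σ) ^ 2) :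
    HasDerivAt (fun x => -(2 * p / σ ^ 2) * x * (1 - (x / σ) ^ 2) ^ (p - 1))
      (2 * p / σ ^ 2 * (1 - (x / σ) ^ 2) ^ (p - 2) * ((2 * p - 1) * (x / σ) ^ 2 - 1)) x := by
  refine (((hasDerivAt_id x).const_mul (-(2 * p / σ ^ 2))).mul
    (hasDerivAt_one_sub_div_sq_rpow (p := p - 1) hx)).congr_deriv ?_
  rw [show p - 1 - 1 = p - 2 by ring, show p - 1 = p - 2 + 1 by ring, Real.rpow_add_one hx.ne']
  simp only [id]
  ring

theorem concaveOn_one_sub_div_sq_rpow {c : ℝ} (hσ : 0 < σ) (hp : 1 ≤ p)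
    (hc : (2 * p - 1) * c ^ 2 = σ ^ 2) :
    ConcaveOn ℝ (Icc 0 c) fun x => (1 - (x / σ) ^ 2) ^ p := by
  have key : ∀ x ∈ Ioo 0 c, 0 < 1 - (x / σ) ^ 2 ∧ (2 * p - 1) * (x / σ) ^ 2 < 1 := by
    intro x hx
    have hlt : (2 * p - 1) * (x / σ) ^ 2 < 1 := by
      rw [div_pow, ← mul_div_assoc, div_lt_one (by positivity), ← hc]
      gcongr
      · linarith
      · exact hx.1.le
      · exact hx.2
    exact ⟨by nlinarith [sq_nonneg (x / σ)], hlt⟩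
  refine concaveOn_of_hasDerivWithinAt2_nonpos (convex_Icc 0 c)
    (continuous_one_sub_div_sq_rpow σ (by linarith)).continuousOn
    (fun x hx => (hasDerivAt_one_sub_div_sq_rpow ?_).hasDerivWithinAt)
    (fun x hx => (hasDerivAt_deriv_one_sub_div_sq_rpow ?_).hasDerivWithinAt) fun x hx => ?_
  all_goals rw [interior_Icc] at hx
  · exact (key x hx).1
  · exact (key x hx).1
  · have := Real.rpow_nonneg (key x hx).1.le (p - 2)
    exact mul_nonpos_of_nonneg_of_nonpos (by positivity) (by linarith [(key x hx).2])

theorem convexOn_one_sub_div_sq_rpow {c : ℝ} (hp : 1 ≤ p) (hc0 : 0 ≤ c)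
    (hc : (2 * p - 1) * c ^ 2 = σ ^ 2) :
    ConvexOn ℝ (Icc c σ) fun x => (1 - (x / σ) ^ 2) ^ p := by
  have key : ∀ x ∈ Ioo c σ, 0 < 1 - (x / σ) ^ 2 ∧ 1 ≤ (2 * p - 1) * (x / σ) ^ 2 := by
    intro x hx
    have hσ : 0 < σ := hc0.trans_lt (hx.1.trans hx.2)
    have hx0 : 0 < x := hc0.trans_lt hx.1
    refine ⟨?_, ?_⟩
    · have : x / σ < 1 := (div_lt_one hσ).2 hx.2
      nlinarith [div_pos hx0 hσ]
    · rw [div_pow, ← mul_div_assoc, one_le_div (by positivity), ← hc]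
      gcongr
      · linarith
      · exact hx.1.le
  refine convexOn_of_hasDerivWithinAt2_nonneg (convex_Icc c σ)
    (continuous_one_sub_div_sq_rpow σ (by linarith)).continuousOn
    (fun x hx => (hasDerivAt_one_sub_div_sq_rpow ?_).hasDerivWithinAt)
    (fun x hx => (hasDerivAt_deriv_one_sub_div_sq_rpow ?_).hasDerivWithinAt) fun x hx => ?_
  all_goals rw [interior_Icc] at hx
  · exact (key x hx).1
  · exact (key x hx).1
  · have := Real.rpow_nonneg (key x hx).1.le (p - 2)
    exact mul_nonneg (by positivity) (by linarith [(key x hx).2])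

end Profile

theorem sum_Icc_one_sub_div_sq_rpow_le {σ c p : ℝ} (hp : 2 ≤ p) (hc0 : 0 ≤ c) (hcσ : c + 2 ≤ σ)
    (hc : (2 * p - 1) * c ^ 2 = σ ^ 2) :
    ∑ l ∈ Finset.Icc 1 ⌊σ⌋₊, (1 - ((l : ℝ) / σ) ^ 2) ^ p ≤
      (∫ x in (0 : ℝ)..σ, (1 - (x / σ) ^ 2) ^ p)
      - (p * ((⌊c⌋₊ : ℝ) / σ) ^ 2 - p * (p - 1) / 2 * (((⌊c⌋₊ : ℝ) / σ) ^ 2) ^ 2) / 2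
      - (1 / 2) * (1 - (((⌊c⌋₊ : ℝ) + 2) / σ) ^ 2) ^ p := by
  have hσ0 : 0 < σ := by linarith
  have hm : (⌊c⌋₊ : ℝ) ≤ c := Nat.floor_le hc0
  have hfσ : (1 - (σ / σ) ^ 2) ^ p = 0 := by
    rw [div_self hσ0.ne', one_pow, sub_self, Real.zero_rpow (by linarith)]
  have bound := sum_Icc_le_integral_of_concaveOn_of_convexOn
    (Nat.le_floor (by push_cast; linarith)) (Nat.floor_le hσ0.le) (Nat.lt_floor_add_one σ)
    (antitoneOn_one_sub_div_sq_rpow hσ0 (by linarith)) hfσ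
    ((concaveOn_one_sub_div_sq_rpow hσ0 (by linarith) hc).subset
      (Icc_subset_Icc le_rfl hm) (convex_Icc _ _))
    ((convexOn_one_sub_div_sq_rpow (by linarith) hc0 hc).subset
      (Icc_subset_Icc (Nat.lt_floor_add_one c).le le_rfl) (convex_Icc _ _))
  have taylor := one_sub_rpow_le_quadratic hp (sq_nonneg ((⌊c⌋₊ : ℝ) / σ))
    (by rw [div_pow, div_le_one (by positivity)]; gcongr; linarith)
  simp only [zero_div, ne_eq, OfNat.ofNat_ne_zero, not_false_eq_true, zero_pow, sub_zero,
    Real.one_rpow] at bound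
  linarith

theorem stmt15_general (d : ℕ) (hd : 11 ≤ d) (L μ : ℝ)
    (σ σ' : ℝ)
    (hσ : σ = L * μ / Real.pi)
    (hσ' : σ' = L * μ / (Real.pi * Real.sqrt ((d : ℝ) - 2)))
    (hσ'1 : 1 ≤ σ') :
    ∑ l ∈ Finset.Icc 1 ⌊σ⌋₊, (1 - ((l : ℝ) / σ) ^ 2) ^ (((d : ℝ) - 1) / 2) ≤
      (∫ x in (0 : ℝ)..σ, (1 - (x / σ) ^ 2) ^ (((d : ℝ) - 1) / 2))
      - ((d : ℝ) - 1) / 4 * ((⌊σ'⌋₊ : ℝ) / σ) ^ 2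
          * (1 - ((d : ℝ) - 3) / 4 * ((⌊σ'⌋₊ : ℝ) / σ) ^ 2)
      - (1 / 2) * (1 - (((⌊σ'⌋₊ : ℝ) + 2) / σ) ^ 2) ^ (((d : ℝ) - 1) / 2) := by
  have hd9 : (9 : ℝ) ≤ d - 2 := by
    have : (11 : ℝ) ≤ d := by exact_mod_cast hd
    linarith
  have hσσ' : σ = σ' * √((d : ℝ) - 2) := by
    rw [hσ, hσ']
    field_simp
  have hsqrt : 3 ≤ √((d : ℝ) - 2) := Real.le_sqrt_of_sq_le (by linarith)
  have hinfl : (2 * (((d : ℝ) - 1) / 2) - 1) * σ' ^ 2 = σ ^ 2 := by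
    rw [hσσ', mul_pow, Real.sq_sqrt (by linarith)]
    ring
  convert sum_Icc_one_sub_div_sq_rpow_le (by linarith) (by linarith) (by nlinarith) hinfl using 2
  ring

/-- For integer `d ≥ 11`, `L, μ > 0`, `σ = Lμ/π`, `σ' = Lμ/(π√(d−2))` with `σ' ≥ 1`:
`Σ_{l=1}^{⌊σ⌋} (1−(l/σ)²)^{(d−1)/2} ≤ ∫_0^σ (1−(x/σ)²)^{(d−1)/2} dx
  − ((d−1)/4)(⌊σ'⌋/σ)²(1 − ((d−3)/4)(⌊σ'⌋/σ)²) − (1/2)(1 − ((⌊σ'⌋+2)/σ)²)^{(d−1)/2}`. -/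
theorem stmt15 (d : ℕ) (hd : 11 ≤ d) (L μ : ℝ) (hL : 0 < L) (hμ : 0 < μ)
    (σ σ' : ℝ)
    (hσ : σ = L * μ / Real.pi)
    (hσ' : σ' = L * μ / (Real.pi * Real.sqrt ((d : ℝ) - 2)))
    (hσ'1 : 1 ≤ σ') :
    ∑ l ∈ Finset.Icc 1 ⌊σ⌋₊, (1 - ((l : ℝ) / σ) ^ 2) ^ (((d : ℝ) - 1) / 2) ≤
      (∫ x in (0 : ℝ)..σ, (1 - (x / σ) ^ 2) ^ (((d : ℝ) - 1) / 2))
      - ((d : ℝ) - 1) / 4 * ((⌊σ'⌋₊ : ℝ) / σ) ^ 2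
          * (1 - ((d : ℝ) - 3) / 4 * ((⌊σ'⌋₊ : ℝ) / σ) ^ 2)
      - (1 / 2) * (1 - (((⌊σ'⌋₊ : ℝ) + 2) / σ) ^ 2) ^ (((d : ℝ) - 1) / 2) :=
  stmt15_general d hd L μ σ σ' hσ hσ' hσ'1
end
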